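/- Let w be an element of a Coxeter group W admitting a decomposition w = w'·w'' where the supports of w' and w'' are disjoint subsets of the simple reflections. Then the Bruhat interval [e,w] is isomorphic as a poset to the product [e,w'] × [e,w''], via the multiplication map (x,y) ↦ xy. -/

import Mathlib

open CoxeterSystem

variable {B W : Type*} [Group W] {M : CoxeterMatrix B}

/-- One step of Bruhat order: multiply on the right by a reflection, increasing length. -/
def bruhatStep (cs : CoxeterSystem M W) (x y : W) : Prop :=
  ∃ t : W, cs.IsReflection t ∧ y = x * t ∧ cs.length x < cs.length y

/-- Bruhat order on a Coxeter group. -/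
def bruhatLE (cs : CoxeterSystem M W) : W → W → Prop :=
  Relation.ReflTransGen (bruhatStep cs)

/-- Strict Bruhat order. -/
def bruhatLT (cs : CoxeterSystem M W) (x y : W) : Prop :=
  bruhatLE cs x y ∧ x ≠ y

/-- Cover relation in Bruhat order. -/
def bruhatCovBy (cs : CoxeterSystem M W) (x y : W) : Prop :=
  bruhatLE cs x y ∧ cs.length y = cs.length x + 1

/-- The Bruhat interval `[u, v]`. -/
def bruhatInterval (cs : CoxeterSystem M W) (u v : W) : Set W :=
  {x | bruhatLE cs u x ∧ bruhatLE cs x v}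

/-- The support of `w`: simple reflections appearing in a reduced word for `w`. -/
def supp (cs : CoxeterSystem M W) (w : W) : Set B :=
  {i | ∃ ω : List B, cs.IsReduced ω ∧ w = cs.wordProd ω ∧ i ∈ ω}

/-!
Tits' construction lets `W` act on `W × ZMod 2`, `s i` sending `(t, ε)` to
`(s i * t * s i, ε + [t = s i])`. Hence the parity of the number of occurrences of `t` in the
right inversion sequence of a word depends only on the product of the word, which gives the strong
exchange condition. From it follow the deletion property and the subword property: `u ≤ w` iff
`u` is the product of a subword of a reduced word for `w`. In particular `i ∈ supp w` iff
`s i ≤ w`, so supports grow along Bruhat order and are subadditive under products and inverses.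

Now let `x ≤ w'` and `y ≤ w''`. If `x₁ * y₁ = x₂ * y₂` for such pairs, then `x₂⁻¹ * x₁ = y₂ * y₁⁻¹`
has empty support, so the factorization is unique. Concatenating reduced words for `x` and `y`
gives a reduced word for `x * y` (a shorter subword would give a second factorization), and the
subwords of a concatenation are the concatenations of subwords.
-/

namespace CoxeterSystem

open List

variable (cs : CoxeterSystem M W)

local prefix:100 "s " => cs.simple
local prefix:100 "π " => cs.wordProd
local prefix:100 "ℓ " => cs.length
local prefix:100 "ris " => cs.rightInvSeq
local prefix:100 "lis " => cs.leftInvSeq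

theorem prod_map_alternatingWord_two_mul {G : Type*} [Monoid G] (f : B → G) (i j : B) (m : ℕ) :
    ((alternatingWord i j (2 * m)).map f).prod = (f i * f j) ^ m := by
  induction m with
  | zero => simp [alternatingWord]
  | succ m ih =>
    rw [show 2 * (m + 1) = 2 * m + 1 + 1 by ring, alternatingWord_succ', alternatingWord_succ',
      if_neg (by simp [parity_simps]), if_pos (by simp [parity_simps])]
    simp [ih, pow_succ', mul_assoc]

theorem reverse_alternatingWord_two_mul (i j : B) (m : ℕ) :
    (alternatingWord i j (2 * m)).reverse = alternatingWord j i (2 * m) := by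
  induction m with
  | zero => simp [alternatingWord]
  | succ m ih =>
    rw [show 2 * (m + 1) = 2 * m + 1 + 1 by ring, alternatingWord_succ', alternatingWord_succ',
      if_neg (by simp [parity_simps]), if_pos (by simp [parity_simps]),
      alternatingWord_succ, alternatingWord_succ]
    simp [ih]

theorem getElem_leftInvSeq_alternatingWord_add (i j : B) (k : ℕ) (hk : k < M i j) :
    (lis (alternatingWord j i (2 * M i j)))[M i j + k]'(by simp; omega) =
      (lis (alternatingWord j i (2 * M i j)))[k]'(by simp; omega) := by
  rw [getElem_leftInvSeq_alternatingWord cs j i _ _ (by omega),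
    getElem_leftInvSeq_alternatingWord cs j i _ _ (by omega), prod_alternatingWord_eq_mul_pow,
    prod_alternatingWord_eq_mul_pow]
  simp [Nat.add_div, pow_add, simple_mul_simple_pow, parity_simps]

theorem even_count_rightInvSeq_alternatingWord [DecidableEq W] (i j : B) (t : W) :
    Even ((ris (alternatingWord i j (2 * M i j))).count t) := by
  have hL : (lis (alternatingWord j i (2 * M i j))).drop (M i j) =
      (lis (alternatingWord j i (2 * M i j))).take (M i j) := by
    apply List.ext_getElem (by simp; omega)
    intro k hk _
    simp only [List.getElem_drop, List.getElem_take]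
    exact cs.getElem_leftInvSeq_alternatingWord_add i j k (by simp at hk; omega)
  rw [← count_reverse, ← leftInvSeq_reverse, reverse_alternatingWord_two_mul,
    ← take_append_drop (M i j) (lis _), count_append, hL]
  exact Even.add_self _

open scoped Classical in
noncomputable def titsAction (i : B) : Function.End (W × ZMod 2) :=
  fun p => (s i * p.1 * s i, p.2 + if p.1 = s i then 1 else 0)

open scoped Classical in
theorem prod_map_titsAction_apply (ω : List B) (p : W × ZMod 2) :
    (ω.map cs.titsAction).prod p = (π ω * p.1 * (π ω)⁻¹, p.2 + (ris ω).count p.1) := by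
  induction ω with
  | nil => show p = _; simp
  | cons i ω ih =>
    have hconj : π ω * p.1 * (π ω)⁻¹ = s i ↔ (π ω)⁻¹ * s i * π ω = p.1 := by
      constructor <;> intro h <;> rw [← h] <;> group
    rw [map_cons, prod_cons]
    change cs.titsAction i ((ω.map cs.titsAction).prod p) = _
    rw [ih]
    simp only [titsAction, rightInvSeq, count_cons, beq_iff_eq, ← hconj, wordProd_cons,
      mul_inv_rev, inv_simple, Nat.cast_add, Nat.cast_ite, Nat.cast_one, Nat.cast_zero,
      Prod.mk.injEq, add_assoc, and_true]
    group

theorem isLiftable_titsAction : M.IsLiftable cs.titsAction := by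
  classical
  intro i j
  have hprod : π (alternatingWord i j (2 * M i j)) = 1 := by
    rw [wordProd, prod_map_alternatingWord_two_mul, simple_mul_simple_pow]
  rw [← prod_map_alternatingWord_two_mul]
  funext p
  rw [prod_map_titsAction_apply, hprod, ZMod.natCast_eq_zero_iff_even.mpr
    (cs.even_count_rightInvSeq_alternatingWord i j p.1)]
  show _ = p
  simp

noncomputable def titsRep : W →* Function.End (W × ZMod 2) :=
  cs.lift ⟨cs.titsAction, cs.isLiftable_titsAction⟩

theorem titsRep_wordProd (ω : List B) : cs.titsRep (π ω) = (ω.map cs.titsAction).prod := by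
  rw [wordProd, map_list_prod, map_map]
  congr 2
  funext i
  exact cs.lift_apply_simple cs.isLiftable_titsAction i

noncomputable def inversionParity (w t : W) : ZMod 2 := (cs.titsRep w (t, 0)).2

open scoped Classical in
theorem inversionParity_wordProd (ω : List B) (t : W) :
    cs.inversionParity (π ω) t = (ris ω).count t := by
  simp [inversionParity, titsRep_wordProd, prod_map_titsAction_apply]

theorem titsRep_apply (w : W) (p : W × ZMod 2) :
    cs.titsRep w p = (w * p.1 * w⁻¹, p.2 + cs.inversionParity w p.1) := by
  classical
  obtain ⟨ω, -, rfl⟩ := cs.exists_isReduced w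
  simp [inversionParity_wordProd, titsRep_wordProd, prod_map_titsAction_apply]

theorem inversionParity_mul (u v t : W) :
    cs.inversionParity (u * v) t = cs.inversionParity v t + cs.inversionParity u (v * t * v⁻¹) := by
  rw [inversionParity, map_mul]
  change (cs.titsRep u (cs.titsRep v (t, 0))).2 = _
  rw [titsRep_apply cs v, titsRep_apply cs u]
  simp

theorem inversionParity_one (t : W) : cs.inversionParity 1 t = 0 := by
  classical
  simpa using cs.inversionParity_wordProd [] t

theorem inversionParity_simple_self (i : B) : cs.inversionParity (s i) (s i) = 1 := by
  classical
  simpa using cs.inversionParity_wordProd [i] (s i)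

theorem inversionParity_self {t : W} (ht : cs.IsReflection t) : cs.inversionParity t t = 1 := by
  obtain ⟨q, i, rfl⟩ := ht
  have hconj : q⁻¹ * (q * s i * q⁻¹) * q⁻¹⁻¹ = s i := by group
  have hcancel := cs.inversionParity_mul q q⁻¹ (q * s i * q⁻¹)
  rw [mul_inv_cancel, inversionParity_one, hconj] at hcancel
  rw [inversionParity_mul, hconj, inversionParity_mul, inversionParity_simple_self,
    inv_simple, simple_mul_simple_cancel_right, ← add_assoc, add_right_comm, ← hcancel, zero_add]

theorem mem_rightInvSeq_of_isRightInversion (ω : List B) {t : W}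
    (ht : cs.IsRightInversion (π ω) t) : t ∈ ris ω := by
  classical
  obtain ⟨β, hβ, hβω⟩ := cs.exists_isReduced (π ω * t)
  have hβt : π β * t = π ω := by rw [← hβω, mul_assoc, ht.1.mul_self, mul_one]
  have hnot : t ∉ ris β := fun h => by
    have := (cs.isRightInversion_of_mem_rightInvSeq hβ h).2
    rw [hβt, ← hβω] at this
    exact lt_asymm ht.2 this
  have hparity : cs.inversionParity (π ω) t = 1 := by
    rw [← hβt, inversionParity_mul, inversionParity_self cs ht.1, ht.1.inv, ht.1.mul_self,
      one_mul, inversionParity_wordProd, count_eq_zero.mpr hnot, Nat.cast_zero, add_zero]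
  rw [inversionParity_wordProd] at hparity
  exact count_pos_iff.mp (Nat.pos_of_ne_zero fun h => by simp [h] at hparity)

theorem exists_eraseIdx_of_isRightInversion (ω : List B) {t : W}
    (ht : cs.IsRightInversion (π ω) t) : ∃ k < ω.length, π ω * t = π (ω.eraseIdx k) := by
  obtain ⟨k, hk, rfl⟩ := mem_iff_getElem.mp (cs.mem_rightInvSeq_of_isRightInversion ω ht)
  rw [length_rightInvSeq] at hk
  exact ⟨k, hk, by rw [← getD_eq_getElem _ 1, wordProd_mul_getD_rightInvSeq]⟩

theorem exists_reduced_sublist (ω : List B) : ∃ φ, φ <+ ω ∧ cs.IsReduced φ ∧ π φ = π ω := by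
  induction ω using List.reverseRecOn with
  | nil => exact ⟨[], Sublist.refl _, by simp [IsReduced], rfl⟩
  | append_singleton ω i ih =>
    obtain ⟨φ, hsub, hφ, hφω⟩ := ih
    have hπ : π (ω ++ [i]) = π φ * s i := by rw [wordProd_append, wordProd_singleton, hφω]
    rcases cs.length_mul_simple (π φ) i with hup | hdown
    · refine ⟨φ ++ [i], hsub.append (Sublist.refl _), ?_, by rw [hπ, wordProd_append,
        wordProd_singleton]⟩
      rw [IsReduced, wordProd_append, wordProd_singleton, hup, hφ.eq, length_append,
        length_singleton]
    · obtain ⟨k, hk, hker⟩ := cs.exists_eraseIdx_of_isRightInversion φ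
        ⟨cs.isReflection_simple i, by omega⟩
      refine ⟨φ.eraseIdx k, (eraseIdx_sublist φ k).trans (hsub.trans (sublist_append_left _ _)),
        ?_, by rw [hπ, hker]⟩
      have := length_eraseIdx_add_one hk
      rw [IsReduced, ← hker]
      have := hφ.eq
      omega

theorem _root_.bruhatLE.trans {cs : CoxeterSystem M W} {u v w : W} (h₁ : bruhatLE cs u v)
    (h₂ : bruhatLE cs v w) : bruhatLE cs u w :=
  Relation.ReflTransGen.trans h₁ h₂

theorem bruhatLE_mul_of_isReflection {w t : W} (ht : cs.IsReflection t)
    (h : ℓ w < ℓ (w * t)) : bruhatLE cs w (w * t) :=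
  Relation.ReflTransGen.single ⟨t, ht, rfl, h⟩

theorem eq_simple_of_length_mul_simple_lt {b t : W} (i : B) (ht : cs.IsReflection t)
    (h₁ : ℓ b < ℓ (b * t)) (h₂ : ℓ (b * t * s i) < ℓ (b * s i)) : t = s i := by
  have hb := cs.length_mul_simple b i
  have hbt := cs.length_mul_simple (b * t) i
  obtain ⟨β, hβ, hβx⟩ := cs.exists_isReduced (b * t * s i)
  have hx : π (β.concat i) = b * t := by
    rw [wordProd_concat, ← hβx, simple_mul_simple_cancel_right]
  have hmem : t ∈ ris (β.concat i) := by
    refine cs.mem_rightInvSeq_of_isRightInversion _ ⟨ht, ?_⟩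
    rw [hx, mul_assoc, ht.mul_self, mul_one]
    exact h₁
  -- an occurrence of `t` before the last letter would make `b * s i` shorter than `b`
  rw [rightInvSeq_concat, concat_eq_append, mem_append, mem_map, mem_singleton] at hmem
  rcases hmem with ⟨r, hr, rfl⟩ | rfl
  · have hbr : b * s i = π β * r := by
      rw [← hβx]
      simp only [MulAut.conj_apply, inv_simple, mul_assoc, simple_mul_simple_cancel_left,
        (cs.isReflection_of_mem_rightInvSeq β hr).mul_self, mul_one]
    have := (cs.isRightInversion_of_mem_rightInvSeq hβ hr).2
    rw [← hbr, ← hβx] at this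
    omega
  · rfl

theorem bruhatLE_mul_simple_or {u w : W} (h : bruhatLE cs u w) (i : B) :
    bruhatLE cs (u * s i) w ∨ bruhatLE cs (u * s i) (w * s i) := by
  induction h with
  | refl => exact Or.inr Relation.ReflTransGen.refl
  | @tail b _ _ hstep ih =>
    obtain ⟨t, ht, rfl, hlt⟩ := hstep
    rcases ih with hb | hbs
    · exact Or.inl (hb.trans (cs.bruhatLE_mul_of_isReflection ht hlt))
    · have ht' : cs.IsReflection (s i * t * s i) := by simpa using ht.conj (s i)
      have hconj : b * t * s i = b * s i * (s i * t * s i) := by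
        simp only [mul_assoc, simple_mul_simple_cancel_left]
      rcases (ht'.length_mul_left_ne (b * s i)).lt_or_gt with hgt | hlt'
      · rw [cs.eq_simple_of_length_mul_simple_lt i ht hlt (by rwa [hconj])]
        exact Or.inl hbs
      · rw [hconj]
        exact Or.inr (hbs.trans (cs.bruhatLE_mul_of_isReflection ht' hlt'))

theorem bruhatLE_wordProd_of_sublist {ω φ : List B} (hω : cs.IsReduced ω) (h : φ <+ ω) :
    bruhatLE cs (π φ) (π ω) := by
  induction ω using List.reverseRecOn generalizing φ with
  | nil =>
    rw [sublist_nil.mp h]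
    exact Relation.ReflTransGen.refl
  | append_singleton ω i ih =>
    have hω' : cs.IsReduced ω := by simpa using hω.take ω.length
    have hstep : bruhatLE cs (π ω) (π (ω ++ [i])) := by
      rw [wordProd_append, wordProd_singleton]
      refine cs.bruhatLE_mul_of_isReflection (cs.isReflection_simple i) ?_
      have h := hω.eq
      rw [wordProd_append, wordProd_singleton, length_append, length_singleton, ← hω'.eq] at h
      omega
    obtain ⟨φ, ψ, rfl, hφ, hψ⟩ := sublist_append_iff.mp h
    rcases sublist_singleton.mp hψ with rfl | rfl
    · simpa using (ih hω' hφ).trans hstep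
    · rw [wordProd_append, wordProd_singleton]
      rcases cs.bruhatLE_mul_simple_or (ih hω' hφ) i with h' | h'
      · exact h'.trans hstep
      · rwa [wordProd_append, wordProd_singleton]

theorem exists_reduced_sublist_of_bruhatLE {ω : List B} {u : W} (h : bruhatLE cs u (π ω)) :
    ∃ φ, φ <+ ω ∧ cs.IsReduced φ ∧ π φ = u := by
  generalize hw : π ω = w at h
  induction h generalizing ω with
  | refl => exact hw ▸ cs.exists_reduced_sublist ω
  | tail _ hstep ih =>
    obtain ⟨t, ht, rfl, hlt⟩ := hstep
    obtain ⟨k, -, hk⟩ := cs.exists_eraseIdx_of_isRightInversion ω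
      ⟨ht, by rwa [hw, mul_assoc, ht.mul_self, mul_one]⟩
    obtain ⟨φ, hφ, hφred, rfl⟩ :=
      ih (by rw [← hk, hw, mul_assoc, ht.mul_self, mul_one] : π (ω.eraseIdx k) = _)
    exact ⟨φ, hφ.trans (eraseIdx_sublist ω k), hφred, rfl⟩

theorem exists_mem_simple_eq_of_bruhatLE {ω : List B} {i : B}
    (h : bruhatLE cs (s i) (π ω)) : ∃ j ∈ ω, s j = s i := by
  obtain ⟨φ, hφ, hφred, hφi⟩ := cs.exists_reduced_sublist_of_bruhatLE h
  have hlen : φ.length = 1 := by rw [← hφred.eq, hφi, length_simple]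
  obtain ⟨j, rfl⟩ := List.length_eq_one_iff.mp hlen
  exact ⟨j, singleton_sublist.mp hφ, by simpa using hφi⟩

theorem wordProd_map_of_simple_eq {f : B → B} (hf : ∀ j, s (f j) = s j) (ω : List B) :
    π (ω.map f) = π ω := by
  simp only [wordProd, map_map, Function.comp_def, hf]

theorem mem_supp_of_mem {ω : List B} (hω : cs.IsReduced ω) {i : B} (hi : i ∈ ω) :
    i ∈ supp cs (π ω) :=
  ⟨ω, hω, rfl, hi⟩

theorem mem_supp_iff {w : W} {i : B} : i ∈ supp cs w ↔ bruhatLE cs (s i) w := by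
  classical
  constructor
  · rintro ⟨ω, hω, rfl, hi⟩
    simpa using cs.bruhatLE_wordProd_of_sublist hω (singleton_sublist.mpr hi)
  · intro h
    obtain ⟨ω, hω, rfl⟩ := cs.exists_isReduced w
    obtain ⟨j, hj, hji⟩ := cs.exists_mem_simple_eq_of_bruhatLE h
    have hf : ∀ k, s (if k = j then i else k) = s k := fun k => by split_ifs <;> simp [*]
    have hπ := cs.wordProd_map_of_simple_eq hf ω
    refine ⟨ω.map fun k => if k = j then i else k, ?_, hπ.symm, mem_map.mpr ⟨j, hj, if_pos rfl⟩⟩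
    rw [IsReduced, hπ, length_map]
    exact hω

theorem supp_subset_of_bruhatLE {x w : W} (h : bruhatLE cs x w) : supp cs x ⊆ supp cs w :=
  fun _ hi => (cs.mem_supp_iff.mpr ((cs.mem_supp_iff.mp hi).trans h))

theorem mem_supp_of_simple_eq {w : W} {i j : B} (hj : j ∈ supp cs w) (hji : s j = s i) :
    i ∈ supp cs w :=
  cs.mem_supp_iff.mpr (hji ▸ cs.mem_supp_iff.mp hj)

theorem supp_mul_subset (u v : W) : supp cs (u * v) ⊆ supp cs u ∪ supp cs v := by
  intro i hi
  obtain ⟨α, hα, rfl⟩ := cs.exists_isReduced u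
  obtain ⟨β, hβ, rfl⟩ := cs.exists_isReduced v
  rw [mem_supp_iff, ← wordProd_append] at hi
  obtain ⟨j, hj, hji⟩ := cs.exists_mem_simple_eq_of_bruhatLE hi
  rcases mem_append.mp hj with hj | hj
  · exact Or.inl (cs.mem_supp_of_simple_eq (cs.mem_supp_of_mem hα hj) hji)
  · exact Or.inr (cs.mem_supp_of_simple_eq (cs.mem_supp_of_mem hβ hj) hji)

theorem supp_inv_subset (w : W) : supp cs w⁻¹ ⊆ supp cs w := by
  intro i hi
  obtain ⟨ω, hω, rfl⟩ := cs.exists_isReduced w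
  rw [mem_supp_iff, ← wordProd_reverse] at hi
  obtain ⟨j, hj, hji⟩ := cs.exists_mem_simple_eq_of_bruhatLE hi
  exact cs.mem_supp_of_simple_eq (cs.mem_supp_of_mem hω (mem_reverse.mp hj)) hji

theorem eq_one_of_supp_eq_empty {w : W} (h : supp cs w = ∅) : w = 1 := by
  obtain ⟨ω, hω, rfl⟩ := cs.exists_isReduced w
  cases ω with
  | nil => rfl
  | cons i ω => exact absurd (cs.mem_supp_of_mem hω mem_cons_self) (h ▸ Set.notMem_empty i)

theorem eq_and_eq_of_mul_eq_mul {x₁ x₂ y₁ y₂ : W}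
    (hd : Disjoint (supp cs x₁ ∪ supp cs x₂) (supp cs y₁ ∪ supp cs y₂))
    (h : x₁ * y₁ = x₂ * y₂) : x₁ = x₂ ∧ y₁ = y₂ := by
  have hz : x₂⁻¹ * x₁ = y₂ * y₁⁻¹ := by
    rw [inv_mul_eq_iff_eq_mul, ← mul_assoc, ← h, mul_inv_cancel_right]
  have hx : supp cs (x₂⁻¹ * x₁) ⊆ supp cs x₁ ∪ supp cs x₂ :=
    (cs.supp_mul_subset _ _).trans
      (Set.union_subset_iff.mpr ⟨(cs.supp_inv_subset _).trans Set.subset_union_right,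
        Set.subset_union_left⟩)
  have hy : supp cs (x₂⁻¹ * x₁) ⊆ supp cs y₁ ∪ supp cs y₂ :=
    hz ▸ (cs.supp_mul_subset _ _).trans
      (Set.union_subset_iff.mpr ⟨Set.subset_union_right,
        (cs.supp_inv_subset _).trans Set.subset_union_left⟩)
  have hz1 : x₂⁻¹ * x₁ = 1 := cs.eq_one_of_supp_eq_empty (Set.subset_empty_iff.mp
    (fun i hi => Set.disjoint_left.mp hd (hx hi) (hy hi)))
  rw [inv_mul_eq_one] at hz1
  subst hz1
  exact ⟨rfl, mul_left_cancel h⟩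

theorem length_mul_of_disjoint_supp {x y : W} (hd : Disjoint (supp cs x) (supp cs y)) :
    ℓ (x * y) = ℓ x + ℓ y := by
  obtain ⟨α, hα, rfl⟩ := cs.exists_isReduced x
  obtain ⟨β, hβ, rfl⟩ := cs.exists_isReduced y
  obtain ⟨φ, hφ, hφred, hφαβ⟩ := cs.exists_reduced_sublist (α ++ β)
  obtain ⟨φ₁, φ₂, rfl, h₁, h₂⟩ := sublist_append_iff.mp hφ
  obtain ⟨e₁, e₂⟩ := cs.eq_and_eq_of_mul_eq_mul
    (hd.mono (Set.union_subset (cs.supp_subset_of_bruhatLE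
        (cs.bruhatLE_wordProd_of_sublist hα h₁)) subset_rfl)
      (Set.union_subset (cs.supp_subset_of_bruhatLE
        (cs.bruhatLE_wordProd_of_sublist hβ h₂)) subset_rfl))
    (by rw [← wordProd_append, hφαβ, wordProd_append])
  refine le_antisymm (cs.length_mul_le _ _) ?_
  calc ℓ (π α) + ℓ (π β) = ℓ (π φ₁) + ℓ (π φ₂) := by rw [e₁, e₂]
    _ ≤ φ₁.length + φ₂.length := add_le_add (cs.length_wordProd_le _) (cs.length_wordProd_le _)
    _ = ℓ (π α * π β) := by rw [← wordProd_append, ← hφαβ, hφred.eq, length_append]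

theorem mul_bruhatLE_mul {x₁ x₂ y₁ y₂ : W} (hx : bruhatLE cs x₁ x₂) (hy : bruhatLE cs y₁ y₂)
    (hℓ : ℓ (x₂ * y₂) = ℓ x₂ + ℓ y₂) : bruhatLE cs (x₁ * y₁) (x₂ * y₂) := by
  obtain ⟨α, hα, rfl⟩ := cs.exists_isReduced x₂
  obtain ⟨β, hβ, rfl⟩ := cs.exists_isReduced y₂
  obtain ⟨φ₁, h₁, -, rfl⟩ := cs.exists_reduced_sublist_of_bruhatLE hx
  obtain ⟨φ₂, h₂, -, rfl⟩ := cs.exists_reduced_sublist_of_bruhatLE hy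
  have hαβ : cs.IsReduced (α ++ β) := by
    rw [IsReduced, wordProd_append, hℓ, hα.eq, hβ.eq, length_append]
  simpa only [wordProd_append] using cs.bruhatLE_wordProd_of_sublist hαβ (h₁.append h₂)

theorem exists_mul_eq_of_bruhatLE_mul {x y z : W} (h : bruhatLE cs z (x * y)) :
    ∃ x' y', bruhatLE cs x' x ∧ bruhatLE cs y' y ∧ x' * y' = z := by
  obtain ⟨α, hα, rfl⟩ := cs.exists_isReduced x
  obtain ⟨β, hβ, rfl⟩ := cs.exists_isReduced y
  rw [← wordProd_append] at h
  obtain ⟨φ, hφ, -, rfl⟩ := cs.exists_reduced_sublist_of_bruhatLE h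
  obtain ⟨φ₁, φ₂, rfl, h₁, h₂⟩ := sublist_append_iff.mp hφ
  exact ⟨π φ₁, π φ₂, cs.bruhatLE_wordProd_of_sublist hα h₁,
    cs.bruhatLE_wordProd_of_sublist hβ h₂, (wordProd_append ..).symm⟩

end CoxeterSystem

/-- If `w = w' * w''` is a disjoint support decomposition, then multiplication gives a poset
isomorphism `[e,w'] × [e,w''] ≃ [e,w]` of Bruhat intervals. -/
theorem stmt2 (cs : CoxeterSystem M W) (w w' w'' : W)
    (hw : w = w' * w'') (hd : Disjoint (supp cs w') (supp cs w'')) :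
    Set.BijOn (fun p : W × W => p.1 * p.2)
      ({x | bruhatLE cs x w'} ×ˢ {y | bruhatLE cs y w''})
      {z | bruhatLE cs z w} ∧
    ∀ x₁ x₂ y₁ y₂ : W, bruhatLE cs x₁ w' → bruhatLE cs x₂ w' →
      bruhatLE cs y₁ w'' → bruhatLE cs y₂ w'' →
      (bruhatLE cs (x₁ * y₁) (x₂ * y₂) ↔ bruhatLE cs x₁ x₂ ∧ bruhatLE cs y₁ y₂) := by
  subst hw
  have hdisj {x₁ x₂ y₁ y₂ : W} (hx₁ : bruhatLE cs x₁ w') (hx₂ : bruhatLE cs x₂ w')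
      (hy₁ : bruhatLE cs y₁ w'') (hy₂ : bruhatLE cs y₂ w'') :
      Disjoint (supp cs x₁ ∪ supp cs x₂) (supp cs y₁ ∪ supp cs y₂) :=
    hd.mono (Set.union_subset (cs.supp_subset_of_bruhatLE hx₁) (cs.supp_subset_of_bruhatLE hx₂))
      (Set.union_subset (cs.supp_subset_of_bruhatLE hy₁) (cs.supp_subset_of_bruhatLE hy₂))
  have hmono {x₁ x₂ y₁ y₂ : W} (hx₂ : bruhatLE cs x₂ w') (hy₂ : bruhatLE cs y₂ w'')
      (hx : bruhatLE cs x₁ x₂) (hy : bruhatLE cs y₁ y₂) : bruhatLE cs (x₁ * y₁) (x₂ * y₂) :=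
    cs.mul_bruhatLE_mul hx hy (cs.length_mul_of_disjoint_supp
      (hd.mono (cs.supp_subset_of_bruhatLE hx₂) (cs.supp_subset_of_bruhatLE hy₂)))
  refine ⟨⟨?_, ?_, ?_⟩, ?_⟩
  · rintro ⟨x, y⟩ ⟨hx, hy⟩
    exact hmono .refl .refl hx hy
  · rintro ⟨x₁, y₁⟩ ⟨hx₁, hy₁⟩ ⟨x₂, y₂⟩ ⟨hx₂, hy₂⟩ h
    obtain ⟨rfl, rfl⟩ := cs.eq_and_eq_of_mul_eq_mul (hdisj hx₁ hx₂ hy₁ hy₂) h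
    rfl
  · intro z hz
    obtain ⟨x, y, hx, hy, rfl⟩ := cs.exists_mul_eq_of_bruhatLE_mul hz
    exact ⟨(x, y), ⟨hx, hy⟩, rfl⟩
  · intro x₁ x₂ y₁ y₂ hx₁ hx₂ hy₁ hy₂
    refine ⟨fun h => ?_, fun ⟨hx, hy⟩ => hmono hx₂ hy₂ hx hy⟩
    obtain ⟨x, y, hx, hy, hxy⟩ := cs.exists_mul_eq_of_bruhatLE_mul h
    obtain ⟨rfl, rfl⟩ :=
      cs.eq_and_eq_of_mul_eq_mul (hdisj hx₁ (hx.trans hx₂) hy₁ (hy.trans hy₂)) hxy.symm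
    exact ⟨hx, hy⟩
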